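/- (Theorem 1B: necessary condition for the mixed fractional Hardy–Sobolev inequality.) Let d ≥ 1 be an integer, p, q, r ∈ (1,∞), and α₁, α₂, β, μ ∈ ℝ. Suppose there is a constant K ∈ (0,∞) such that L_{r,μ}(u) ≤ K · M_{p,q,α₁,α₂,β}(u) for every u ∈ C_c^∞(ℝ^d), and suppose there exists u₀ ∈ C_c^∞(ℝ^d) with L_{r,μ}(u₀) > 0 and M_{p,q,α₁,α₂,β}(u₀) < ∞. Then (d−μ)/r = (d+α₁−β)/p + (d+α₂)/q. -/

import Mathlib

open MeasureTheory ENNReal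

/-- `L_{r,μ}(u) = (∫_{ℝ^d} |u(x)|^r |x|^{−μ} dx)^{1/r}`, with values in `[0,∞]`. -/
noncomputable def HSleft (d : ℕ) (r μ : ℝ) (u : EuclideanSpace ℝ (Fin d) → ℝ) : ℝ≥0∞ :=
  (∫⁻ x : EuclideanSpace ℝ (Fin d),
      ENNReal.ofReal (|u x| ^ r * ‖x‖ ^ (-μ))) ^ (1 / r)

/-- Mixed norm
`M_{p,q,α₁,α₂,β}(u) = (∫ |y|^{α₂} (∫ |u(x)−u(y)|^p |x|^{α₁} |x−y|^{−β} dx)^{q/p} dy)^{1/q}`,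
with values in `[0,∞]`. -/
noncomputable def HSmixed (d : ℕ) (p q α₁ α₂ β : ℝ)
    (u : EuclideanSpace ℝ (Fin d) → ℝ) : ℝ≥0∞ :=
  (∫⁻ y : EuclideanSpace ℝ (Fin d),
      ENNReal.ofReal (‖y‖ ^ α₂) *
        (∫⁻ x : EuclideanSpace ℝ (Fin d),
            ENNReal.ofReal (|u x - u y| ^ p * ‖x‖ ^ α₁ * ‖x - y‖ ^ (-β))) ^ (q / p)) ^ (1 / q)

lemma lint_smul {d : ℕ} (f : EuclideanSpace ℝ (Fin d) → ℝ≥0∞) {c : ℝ} (hc : 0 < c) :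
    ∫⁻ x, f (c • x) = ENNReal.ofReal (c ^ (-(d : ℝ))) * ∫⁻ x, f x := by
  have hc0 : c ≠ 0 := hc.ne'
  let e : EuclideanSpace ℝ (Fin d) ≃ᵐ EuclideanSpace ℝ (Fin d) :=
    (Homeomorph.smul (Units.mk0 c hc0)).toMeasurableEquiv
  have h1 : ∫⁻ x, f x ∂(Measure.map e volume) = ∫⁻ x, f (c • x) := by
    rw [lintegral_map_equiv]
    rfl
  have h2 : Measure.map (⇑e) (volume : Measure (EuclideanSpace ℝ (Fin d)))
      = Measure.map (c • ·) volume := rfl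
  rw [h2, MeasureTheory.Measure.map_addHaar_smul volume hc0] at h1
  rw [← h1, lintegral_smul_measure]
  congr 1
  rw [finrank_euclideanSpace_fin, abs_inv, abs_of_pos (pow_pos hc d)]
  rw [← Real.rpow_natCast c d, ← Real.rpow_neg_one]
  rw [← Real.rpow_mul hc.le]
  ring_nf

lemma HSleft_scale {d : ℕ} (r μ : ℝ) (hr : 0 < r) (u : EuclideanSpace ℝ (Fin d) → ℝ)
    {c : ℝ} (hc : 0 < c) :
    HSleft d r μ (fun x => u (c • x)) =
      ENNReal.ofReal (c ^ ((μ - d) / r)) * HSleft d r μ u := by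
  unfold HSleft
  have key : ∀ x : EuclideanSpace ℝ (Fin d),
      ENNReal.ofReal (|u (c • x)| ^ r * ‖x‖ ^ (-μ)) =
        ENNReal.ofReal (c ^ μ) *
          ENNReal.ofReal (|u (c • x)| ^ r * ‖c • x‖ ^ (-μ)) := by
    intro x
    rw [← ENNReal.ofReal_mul (by positivity)]
    congr 1
    rw [norm_smul, Real.norm_eq_abs, abs_of_pos hc,
        Real.mul_rpow hc.le (norm_nonneg x), Real.rpow_neg hc.le]
    have h0 : c ^ μ ≠ 0 := (Real.rpow_pos_of_pos hc μ).ne'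
    field_simp
  simp_rw [key]
  rw [lintegral_const_mul' _ _ ofReal_ne_top]
  have hs := lint_smul (fun z => ENNReal.ofReal (|u z| ^ r * ‖z‖ ^ (-μ))) hc
  try simp only [] at hs
  rw [hs, ← mul_assoc, ← ENNReal.ofReal_mul (Real.rpow_pos_of_pos hc μ).le,
    ← Real.rpow_add hc,
    ENNReal.mul_rpow_of_nonneg _ _ (by positivity : (0:ℝ) ≤ 1 / r),
    ENNReal.ofReal_rpow_of_pos (Real.rpow_pos_of_pos hc _),
    ← Real.rpow_mul hc.le]
  congr 2
  ring

lemma HSmixed_scale {d : ℕ} (p q α₁ α₂ β : ℝ) (hp : 0 < p) (hq : 0 < q)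
    (u : EuclideanSpace ℝ (Fin d) → ℝ) {c : ℝ} (hc : 0 < c) :
    HSmixed d p q α₁ α₂ β (fun x => u (c • x)) =
      ENNReal.ofReal (c ^ ((β - α₁ - d) / p + (-α₂ - d) / q)) *
        HSmixed d p q α₁ α₂ β u := by
  unfold HSmixed
  set F : EuclideanSpace ℝ (Fin d) → ℝ≥0∞ := fun y =>
    ∫⁻ x, ENNReal.ofReal (|u x - u y| ^ p * ‖x‖ ^ α₁ * ‖x - y‖ ^ (-β)) with hF
  have inner_eq : ∀ y : EuclideanSpace ℝ (Fin d),
      (∫⁻ x, ENNReal.ofReal (|u (c • x) - u (c • y)| ^ p * ‖x‖ ^ α₁ * ‖x - y‖ ^ (-β)))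
        = ENNReal.ofReal (c ^ (β - α₁ - d)) * F (c • y) := by
    intro y
    have key : ∀ x : EuclideanSpace ℝ (Fin d),
        ENNReal.ofReal (|u (c • x) - u (c • y)| ^ p * ‖x‖ ^ α₁ * ‖x - y‖ ^ (-β)) =
          ENNReal.ofReal (c ^ (β - α₁)) *
            ENNReal.ofReal (|u (c • x) - u (c • y)| ^ p * ‖c • x‖ ^ α₁ *
              ‖c • x - c • y‖ ^ (-β)) := by
      intro x
      rw [← ENNReal.ofReal_mul (by positivity)]
      congr 1
      rw [show c • x - c • y = c • (x - y) by module,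
          norm_smul, norm_smul, Real.norm_eq_abs, abs_of_pos hc,
          Real.mul_rpow hc.le (norm_nonneg x),
          Real.mul_rpow hc.le (norm_nonneg (x - y)),
          Real.rpow_neg hc.le, Real.rpow_sub hc]
      have h1 : c ^ α₁ ≠ 0 := (Real.rpow_pos_of_pos hc α₁).ne'
      have h2 : c ^ β ≠ 0 := (Real.rpow_pos_of_pos hc β).ne'
      field_simp
    simp_rw [key]
    rw [lintegral_const_mul' _ _ ofReal_ne_top]
    have hs := lint_smul
      (fun z => ENNReal.ofReal (|u z - u (c • y)| ^ p * ‖z‖ ^ α₁ * ‖z - c • y‖ ^ (-β))) hc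
    try simp only [] at hs
    rw [hs, ← mul_assoc, ← ENNReal.ofReal_mul (Real.rpow_pos_of_pos hc _).le,
      ← Real.rpow_add hc]
    congr 2
  simp_rw [inner_eq]
  have outer_key : ∀ y : EuclideanSpace ℝ (Fin d),
      ENNReal.ofReal (‖y‖ ^ α₂) *
          (ENNReal.ofReal (c ^ (β - α₁ - d)) * F (c • y)) ^ (q / p) =
        ENNReal.ofReal (c ^ ((β - α₁ - d) * (q / p) - α₂)) *
          (ENNReal.ofReal (‖c • y‖ ^ α₂) * F (c • y) ^ (q / p)) := by
    intro y
    rw [ENNReal.mul_rpow_of_nonneg _ _ (by positivity : (0:ℝ) ≤ q / p),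
      ENNReal.ofReal_rpow_of_pos (Real.rpow_pos_of_pos hc _),
      ← Real.rpow_mul hc.le]
    have hn : ENNReal.ofReal (‖c • y‖ ^ α₂) =
        ENNReal.ofReal (c ^ α₂) * ENNReal.ofReal (‖y‖ ^ α₂) := by
      rw [← ENNReal.ofReal_mul (Real.rpow_pos_of_pos hc _).le]
      congr 1
      rw [norm_smul, Real.norm_eq_abs, abs_of_pos hc, Real.mul_rpow hc.le (norm_nonneg y)]
    rw [hn, show ENNReal.ofReal (c ^ ((β - α₁ - d) * (q / p) - α₂)) =
        ENNReal.ofReal (c ^ ((β - α₁ - d) * (q / p))) * ENNReal.ofReal (c ^ (-α₂)) by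
      rw [← ENNReal.ofReal_mul (Real.rpow_pos_of_pos hc _).le, ← Real.rpow_add hc]
      congr 1]
    have hcan : ENNReal.ofReal (c ^ (-α₂)) * ENNReal.ofReal (c ^ α₂) = 1 := by
      rw [← ENNReal.ofReal_mul (Real.rpow_pos_of_pos hc _).le, ← Real.rpow_add hc]
      simp
    calc ENNReal.ofReal (‖y‖ ^ α₂) *
          (ENNReal.ofReal (c ^ ((β - α₁ - d) * (q / p))) * F (c • y) ^ (q / p))
        = ENNReal.ofReal (c ^ ((β - α₁ - d) * (q / p))) *
            ((ENNReal.ofReal (c ^ (-α₂)) * ENNReal.ofReal (c ^ α₂)) *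
              (ENNReal.ofReal (‖y‖ ^ α₂) * F (c • y) ^ (q / p))) := by
          rw [hcan]; ring_nf
      _ = ENNReal.ofReal (c ^ ((β - α₁ - d) * (q / p))) * ENNReal.ofReal (c ^ (-α₂)) *
            (ENNReal.ofReal (c ^ α₂) * ENNReal.ofReal (‖y‖ ^ α₂) * F (c • y) ^ (q / p)) := by
          ring_nf
  simp_rw [outer_key]
  rw [lintegral_const_mul' _ _ ofReal_ne_top]
  have hs := lint_smul
    (fun z => ENNReal.ofReal (‖z‖ ^ α₂) * F z ^ (q / p)) hc
  try simp only [] at hs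
  rw [hs, ← mul_assoc, ← ENNReal.ofReal_mul (Real.rpow_pos_of_pos hc _).le,
    ← Real.rpow_add hc,
    ENNReal.mul_rpow_of_nonneg _ _ (by positivity : (0:ℝ) ≤ 1 / q),
    ENNReal.ofReal_rpow_of_pos (Real.rpow_pos_of_pos hc _),
    ← Real.rpow_mul hc.le]
  congr 2
  field_simp
  ring

/-- Theorem 1B: necessary condition for the mixed fractional
Hardy–Sobolev inequality on `ℝ^d`. -/
theorem necessary_condition_mixed_HS
    (d : ℕ) (hd : 1 ≤ d) (p q r α₁ α₂ β μ : ℝ)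
    (hp : 1 < p) (hq : 1 < q) (hr : 1 < r)
    (K : ℝ) (hK : 0 < K)
    (hineq : ∀ u : EuclideanSpace ℝ (Fin d) → ℝ,
      ContDiff ℝ (⊤ : ℕ∞) u → HasCompactSupport u →
        HSleft d r μ u ≤ ENNReal.ofReal K * HSmixed d p q α₁ α₂ β u)
    (hex : ∃ u₀ : EuclideanSpace ℝ (Fin d) → ℝ,
      ContDiff ℝ (⊤ : ℕ∞) u₀ ∧ HasCompactSupport u₀ ∧
        0 < HSleft d r μ u₀ ∧ HSmixed d p q α₁ α₂ β u₀ < ⊤) :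
    ((d : ℝ) - μ) / r = ((d : ℝ) + α₁ - β) / p + ((d : ℝ) + α₂) / q := by
  obtain ⟨u₀, hsm, hcs, hL, hM⟩ := hex
  set L := HSleft d r μ u₀ with hLdef
  set M := HSmixed d p q α₁ α₂ β u₀ with hMdef
  have hLM : L ≤ ENNReal.ofReal K * M := hineq u₀ hsm hcs
  have hLtop : L ≠ ⊤ :=
    ne_top_of_le_ne_top (ENNReal.mul_ne_top ofReal_ne_top hM.ne) hLM
  have hMpos : 0 < M := by
    rcases eq_or_lt_of_le (zero_le : 0 ≤ M) with h | h
    · rw [← h, mul_zero] at hLM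
      exact absurd (le_antisymm hLM zero_le) hL.ne'
    · exact h
  set A := (μ - (d : ℝ)) / r with hAdef
  set B := (β - α₁ - (d : ℝ)) / p + (-α₂ - (d : ℝ)) / q with hBdef
  have hfam : ∀ c : ℝ, 0 < c →
      ENNReal.ofReal (c ^ A) * L ≤ ENNReal.ofReal K * (ENNReal.ofReal (c ^ B) * M) := by
    intro c hc
    have h1 := hineq (fun x => u₀ (c • x))
      (hsm.comp (contDiff_id.const_smul c))
      (hcs.comp_homeomorph (Homeomorph.smul (Units.mk0 c hc.ne')))
    rwa [HSleft_scale r μ (by linarith) u₀ hc,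
      HSmixed_scale p q α₁ α₂ β (by linarith) (by linarith) u₀ hc] at h1
  set L' := L.toReal with hL'def
  set M' := M.toReal with hM'def
  have hL' : 0 < L' := ENNReal.toReal_pos hL.ne' hLtop
  have hM' : 0 < M' := ENNReal.toReal_pos hMpos.ne' hM.ne
  have hreal : ∀ c : ℝ, 0 < c → c ^ A * L' ≤ K * (c ^ B * M') := by
    intro c hc
    have h2 := ENNReal.toReal_mono
      (ENNReal.mul_ne_top ofReal_ne_top (ENNReal.mul_ne_top ofReal_ne_top hM.ne))
      (hfam c hc)
    rwa [ENNReal.toReal_mul, ENNReal.toReal_mul, ENNReal.toReal_mul,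
      ENNReal.toReal_ofReal (Real.rpow_pos_of_pos hc A).le,
      ENNReal.toReal_ofReal (Real.rpow_pos_of_pos hc B).le,
      ENNReal.toReal_ofReal hK.le] at h2
  have hAB : A = B := by
    by_contra hne
    have hbd : ∀ c : ℝ, 0 < c → c ^ (A - B) ≤ K * M' / L' := by
      intro c hc
      have h := hreal c hc
      have hcB : 0 < c ^ B := Real.rpow_pos_of_pos hc B
      have h3 : c ^ (A - B) * c ^ B * L' ≤ K * (c ^ B * M') := by
        rw [← Real.rpow_add hc, sub_add_cancel]; exact h
      rw [le_div_iff₀ hL']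
      have h4 : (c ^ (A - B) * L') * c ^ B ≤ (K * M') * c ^ B := by linarith
      exact le_of_mul_le_mul_right h4 hcB
    have htne : A - B ≠ 0 := sub_ne_zero.mpr hne
    set C := K * M' / L' with hCdef
    have hC : 0 < C := by positivity
    have hc0 : (0:ℝ) < (C + 1) ^ (1 / (A - B)) := Real.rpow_pos_of_pos (by linarith) _
    have hcon := hbd _ hc0
    rw [← Real.rpow_mul (by linarith : (0:ℝ) ≤ C + 1), one_div,
      inv_mul_cancel₀ htne, Real.rpow_one] at hcon
    linarith
  have e1 : ((d : ℝ) - μ) / r = -A := by rw [hAdef]; ring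
  have e2 : ((d : ℝ) + α₁ - β) / p + ((d : ℝ) + α₂) / q = -B := by rw [hBdef]; ring
  rw [e1, e2, hAB]
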